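/- arXiv:2303.05978 — 3 statements merged into one kernel-verified Lean document; each statement's English description precedes it below -/
import Mathlib

section
/- Let m ≥ n ≥ 1, let Σ_μ ∈ ℝ^{m×m} and Σ_ν ∈ ℝ^{n×n} be symmetric positive definite matrices with spectral decompositions Σ_μ = P_μᵀ D_μ P_μ and Σ_ν = P_νᵀ D_ν P_ν, where P_μ, P_ν are orthogonal and D_μ, D_ν are diagonal with nonincreasing positive diagonal entries, and let (D_μ)_{≤n} ∈ ℝ^{n×n} be the top-left n×n block of D_μ. Let Ĩ ∈ ℝ^{n×n} be any diagonal matrix with diagonal entries ±1, let A = (Ĩ D_ν^{1/2} ((D_μ)_{≤n})^{−1/2} , 0) ∈ ℝ^{n×m}, and define the linear map T*(x) = P_νᵀ A P_μ x. Then the pushforward of N(0, Σ_μ) under T* equals N(0, Σ_ν). -/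
/-!
The image of the standard Gaussian on `ℝ^k` under a matrix `B` is a centred Gaussian with
covariance `B Bᵀ`, and Gaussians are determined by mean and covariance. Since `N(0, S)` is the
image under `√S`, the image of `N(0, Σ_μ)` under `T*` is `N(0, T* Σ_μ T*ᵀ)`, and
`T* Σ_μ T*ᵀ = P_νᵀ (A D_μ Aᵀ) P_ν`. The zero columns of `A` cut `D_μ` down to its top
block, so `A D_μ Aᵀ` is diagonal with entries `Ĩ_i² · D_ν,i · D_μ,i / (√D_μ,i)² = D_ν,i`.
-/

open MeasureTheory ProbabilityTheory Matrix

noncomputable section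

/-- The centered Gaussian measure `N(0, S)` on `ℝ^d`, realized as the pushforward of the
standard Gaussian by multiplication with the positive semidefinite square root of `S`. -/
def gaussianN {d : ℕ} (S : Matrix (Fin d) (Fin d) ℝ) (hS : S.PosSemidef) :
    Measure (Fin d → ℝ) :=
  (Measure.pi fun _ : Fin d => gaussianReal 0 1).map fun x =>
    ((hS.1.eigenvectorUnitary : Matrix (Fin d) (Fin d) ℝ) *
      diagonal (Real.sqrt ∘ hS.1.eigenvalues) *
      (star hS.1.eigenvectorUnitary : Matrix (Fin d) (Fin d) ℝ)).mulVec x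

/-- The top-left `n×n` block of an `m×m` matrix. -/
def topBlock {m n : ℕ} (hnm : n ≤ m) (D : Matrix (Fin m) (Fin m) ℝ) :
    Matrix (Fin n) (Fin n) ℝ :=
  Matrix.of fun i j => D (Fin.castLE hnm i) (Fin.castLE hnm j)

/-- Entrywise square root (for a diagonal matrix, the diagonal matrix of square roots). -/
def sqrtDiag {k : ℕ} (D : Matrix (Fin k) (Fin k) ℝ) : Matrix (Fin k) (Fin k) ℝ :=
  Matrix.of fun i j => Real.sqrt (D i j)

/-- Entrywise inverse square root (for a positive definite diagonal matrix, the diagonal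
matrix of inverse square roots; off-diagonal zeros are sent to `(√0)⁻¹ = 0`). -/
def invSqrtDiag {k : ℕ} (D : Matrix (Fin k) (Fin k) ℝ) : Matrix (Fin k) (Fin k) ℝ :=
  Matrix.of fun i j => (Real.sqrt (D i j))⁻¹

/-- Pad an `n×n` matrix with `m − n` zero columns to get an `n×m` matrix. -/
def padCols {n m : ℕ} (hnm : n ≤ m) (B : Matrix (Fin n) (Fin n) ℝ) :
    Matrix (Fin n) (Fin m) ℝ :=
  Matrix.of fun i j => if h : (j : ℕ) < n then B i ⟨(j : ℕ), h⟩ else 0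

open WithLp
open scoped MatrixOrder

section Gaussian

variable {ι κ : Type*} [Fintype ι] [Fintype κ]

theorem posSemidef_mul_transpose_self (B : Matrix κ ι ℝ) : (B * Bᵀ).PosSemidef := by
  simpa using posSemidef_self_mul_conjTranspose B

variable [DecidableEq ι] [DecidableEq κ]

theorem stdGaussian_map_toEuclideanLin (B : Matrix κ ι ℝ) :
    (stdGaussian (EuclideanSpace ℝ ι)).map (toEuclideanLin B).toContinuousLinearMap
      = multivariateGaussian 0 (B * Bᵀ) := by
  apply IsGaussian.ext
  · simp only [id]
    rw [ContinuousLinearMap.integral_id_map IsGaussian.integrable_id]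
    simp
  · ext u v
    rw [covarianceBilin_map IsGaussian.memLp_two_id, covarianceBilin_stdGaussian,
      covarianceBilin_multivariateGaussian (posSemidef_mul_transpose_self B),
      innerSL_apply_apply, ← LinearMap.adjoint_toContinuousLinearMap,
      LinearMap.coe_toContinuousLinearMap', LinearMap.adjoint_inner_left,
      ← toEuclideanLin_conjTranspose_eq_adjoint]
    simp [EuclideanSpace.inner_eq_star_dotProduct, toLpLin_apply, mulVec_mulVec, dotProduct_comm]

theorem pi_gaussianReal_map_mulVec (B : Matrix κ ι ℝ) :
    (Measure.pi fun _ : ι => gaussianReal 0 1).map B.mulVec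
      = (multivariateGaussian 0 (B * Bᵀ)).map ofLp := by
  have hpi : Measure.pi (fun _ : ι => gaussianReal 0 1)
      = (stdGaussian (EuclideanSpace ℝ ι)).map ofLp := by
    rw [← map_pi_eq_stdGaussian, Measure.map_map (by fun_prop) (by fun_prop)]
    exact Measure.map_id.symm
  rw [hpi, ← stdGaussian_map_toEuclideanLin, Measure.map_map (by fun_prop) (by fun_prop),
    Measure.map_map (by fun_prop) (by fun_prop)]
  rfl

theorem sqrt_mul_transpose_sqrt {S : Matrix ι ι ℝ} (hS : S.PosSemidef) :
    CFC.sqrt S * (CFC.sqrt S)ᵀ = S := by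
  rw [← conjTranspose_eq_transpose_of_trivial, ← star_eq_conjTranspose,
    (CFC.sqrt_nonneg S).isSelfAdjoint.star_eq, CFC.sqrt_mul_sqrt_self S hS.nonneg]

end Gaussian

theorem gaussianN_eq_map_mulVec_sqrt {d : ℕ} (S : Matrix (Fin d) (Fin d) ℝ)
    (hS : S.PosSemidef) :
    gaussianN S hS = (Measure.pi fun _ : Fin d => gaussianReal 0 1).map (CFC.sqrt S).mulVec := by
  rw [CFC.sqrt_eq_real_sqrt S hS.nonneg, cfcₙ_eq_cfc, hS.1.cfc_eq]
  rfl

theorem gaussianN_map_mulVec {m n : ℕ} {S : Matrix (Fin m) (Fin m) ℝ}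
    {S' : Matrix (Fin n) (Fin n) ℝ} (hS : S.PosSemidef) (hS' : S'.PosSemidef)
    (T : Matrix (Fin n) (Fin m) ℝ)
    (hTS : T * S * Tᵀ = S') :
    (gaussianN S hS).map T.mulVec = gaussianN S' hS' := by
  have hcomp : T.mulVec ∘ (CFC.sqrt S).mulVec = (T * CFC.sqrt S).mulVec :=
    funext fun x => mulVec_mulVec x T _
  rw [gaussianN_eq_map_mulVec_sqrt, gaussianN_eq_map_mulVec_sqrt,
    Measure.map_map (by fun_prop) (by fun_prop), hcomp, pi_gaussianReal_map_mulVec,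
    pi_gaussianReal_map_mulVec, sqrt_mul_transpose_sqrt hS', ← hTS, transpose_mul,
    Matrix.mul_assoc, Matrix.mul_assoc, ← Matrix.mul_assoc (CFC.sqrt S),
    sqrt_mul_transpose_sqrt hS]

theorem padCols_eq_mul {n m : ℕ} (hnm : n ≤ m) (B : Matrix (Fin n) (Fin n) ℝ) :
    padCols hnm B =
      B * (1 : Matrix (Fin m) (Fin m) ℝ).submatrix (Fin.castLE hnm) (Equiv.refl _) := by
  ext i j
  by_cases h : (j : ℕ) < n
  · obtain ⟨j, rfl⟩ : ∃ j', Fin.castLE hnm j' = j := ⟨⟨j, h⟩, rfl⟩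
    simp [padCols, mul_apply, one_apply, Fin.castLE_inj]
  · have hj : ∀ l : Fin n, Fin.castLE hnm l ≠ j := fun l hl => h (hl ▸ l.isLt)
    simp [padCols, mul_apply, one_apply, h, hj]

theorem padCols_mul_mul_transpose {n m : ℕ} (hnm : n ≤ m) (B : Matrix (Fin n) (Fin n) ℝ)
    (D : Matrix (Fin m) (Fin m) ℝ) :
    padCols hnm B * D * (padCols hnm B)ᵀ = B * topBlock hnm D * Bᵀ := by
  rw [padCols_eq_mul, transpose_mul, transpose_submatrix, transpose_one, Matrix.mul_assoc B,
    one_submatrix_mul, Matrix.mul_assoc, ← Matrix.mul_assoc _ _ Bᵀ, mul_submatrix_one]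
  simp only [Matrix.mul_assoc]
  rfl

theorem sqrtDiag_diagonal {k : ℕ} (d : Fin k → ℝ) :
    sqrtDiag (diagonal d) = diagonal fun i => Real.sqrt (d i) := by
  ext i j
  rcases eq_or_ne i j with rfl | h <;> simp [sqrtDiag, diagonal_apply_ne, *]

theorem invSqrtDiag_diagonal {k : ℕ} (d : Fin k → ℝ) :
    invSqrtDiag (diagonal d) = diagonal fun i => (Real.sqrt (d i))⁻¹ := by
  ext i j
  rcases eq_or_ne i j with rfl | h <;> simp [invSqrtDiag, diagonal_apply_ne, *]

theorem signed_sqrtDiag_mul_invSqrtDiag_conj_eq {k : ℕ} {I D E : Matrix (Fin k) (Fin k) ℝ}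
    (hI : I.IsDiag) (hD : D.IsDiag) (hE : E.IsDiag) (hI1 : ∀ i, I i i = 1 ∨ I i i = -1)
    (hD0 : ∀ i, 0 ≤ D i i) (hE0 : ∀ i, 0 < E i i) :
    (I * sqrtDiag D * invSqrtDiag E) * E * (I * sqrtDiag D * invSqrtDiag E)ᵀ = D := by
  rw [← hI.diagonal_diag, ← hD.diagonal_diag, ← hE.diagonal_diag, sqrtDiag_diagonal,
    invSqrtDiag_diagonal]
  simp only [diagonal_mul_diagonal, diagonal_transpose]
  congr 1
  funext i
  have hE' : Real.sqrt (E i i) ^ 2 = E i i := Real.sq_sqrt (hE0 i).le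
  have hsE : Real.sqrt (E i i) ≠ 0 := (Real.sqrt_pos.mpr (hE0 i)).ne'
  have hI2 : I i i ^ 2 = 1 := by rcases hI1 i with h | h <;> simp [h]
  simp only [diag_apply]
  field_simp
  rw [hI2, hE', Real.sq_sqrt (hD0 i)]
  ring

theorem gaussian_pushforward_general {m n : ℕ} (hnm : n ≤ m)
    (Sμ Pμ Dμ : Matrix (Fin m) (Fin m) ℝ) (Sν Pν Dν : Matrix (Fin n) (Fin n) ℝ)
    (hSμ : Sμ.PosDef) (hSν : Sν.PosDef)
    (hPμ : Pμᵀ * Pμ = 1)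
    (hDμdiag : Dμ.IsDiag) (hDνdiag : Dν.IsDiag)
    (hDμpos : ∀ i, 0 < Dμ i i) (hDνpos : ∀ i, 0 < Dν i i)
    (hμdec : Sμ = Pμᵀ * Dμ * Pμ) (hνdec : Sν = Pνᵀ * Dν * Pν)
    (Itld : Matrix (Fin n) (Fin n) ℝ) (hItld : Itld.IsDiag)
    (hIpm : ∀ i, Itld i i = 1 ∨ Itld i i = -1) :
    (gaussianN Sμ hSμ.posSemidef).map
        (fun x => (Pνᵀ * padCols hnm (Itld * sqrtDiag Dν * invSqrtDiag (topBlock hnm Dμ))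
          * Pμ).mulVec x)
      = gaussianN Sν hSν.posSemidef := by
  set A := padCols hnm (Itld * sqrtDiag Dν * invSqrtDiag (topBlock hnm Dμ))
  have hA : A * Dμ * Aᵀ = Dν := by
    rw [padCols_mul_mul_transpose]
    exact signed_sqrtDiag_mul_invSqrtDiag_conj_eq hItld hDνdiag
      (hDμdiag.submatrix (Fin.castLE_injective hnm)) hIpm (fun i => (hDνpos i).le)
      (fun i => hDμpos _)
  have hPμ' : Pμ * Pμᵀ = 1 := mul_eq_one_comm.mp hPμ
  refine gaussianN_map_mulVec _ _ _ ?_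
  rw [hμdec, hνdec, ← hA]
  simp only [transpose_mul, transpose_transpose, Matrix.mul_assoc]
  rw [← Matrix.mul_assoc Pμ Pμᵀ, hPμ', Matrix.one_mul, ← Matrix.mul_assoc Pμ Pμᵀ,
    hPμ', Matrix.one_mul]

/-- the map `T*(x) = P_νᵀ A P_μ x`, with
`A = (Ĩ D_ν^{1/2} ((D_μ)_{≤n})^{−1/2}, 0)`, pushes `N(0, Σ_μ)` forward to `N(0, Σ_ν)`. -/
theorem gaussian_pushforward {m n : ℕ} (hn : 1 ≤ n) (hnm : n ≤ m)
    (Sμ Pμ Dμ : Matrix (Fin m) (Fin m) ℝ) (Sν Pν Dν : Matrix (Fin n) (Fin n) ℝ)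
    (hSμ : Sμ.PosDef) (hSν : Sν.PosDef)
    (hPμ : Pμᵀ * Pμ = 1) (hPν : Pνᵀ * Pν = 1)
    (hDμdiag : Dμ.IsDiag) (hDνdiag : Dν.IsDiag)
    (hDμpos : ∀ i, 0 < Dμ i i) (hDνpos : ∀ i, 0 < Dν i i)
    (hDμmono : ∀ i j : Fin m, i ≤ j → Dμ j j ≤ Dμ i i)
    (hDνmono : ∀ i j : Fin n, i ≤ j → Dν j j ≤ Dν i i)
    (hμdec : Sμ = Pμᵀ * Dμ * Pμ) (hνdec : Sν = Pνᵀ * Dν * Pν)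
    (Itld : Matrix (Fin n) (Fin n) ℝ) (hItld : Itld.IsDiag)
    (hIpm : ∀ i, Itld i i = 1 ∨ Itld i i = -1) :
    (gaussianN Sμ hSμ.posSemidef).map
        (fun x => (Pνᵀ * padCols hnm (Itld * sqrtDiag Dν * invSqrtDiag (topBlock hnm Dμ))
          * Pμ).mulVec x)
      = gaussianN Sν hSν.posSemidef :=
  gaussian_pushforward_general hnm Sμ Pμ Dμ Sν Pν Dν hSμ hSν hPμ hDμdiag hDνdiag hDμpos hDνpos hμdec
    hνdec Itld hItld hIpm
end
end

section
/- Let μ and ν be Borel probability measures on ℝ^m and ℝ^n respectively, with finite fourth moments (∫‖x‖⁴ dμ(x) < ∞ and ∫‖y‖⁴ dν(y) < ∞). Then the infimum over couplings π ∈ Π(μ, ν) of ∫∫ (⟨x, x'⟩ − ⟨y, y'⟩)² dπ(x, y) dπ(x', y') equals ∫∫ ⟨x, x'⟩² dμ(x) dμ(x') + ∫∫ ⟨y, y'⟩² dν(y) dν(y') − 2 · (supremum over π ∈ Π(μ, ν) of ‖M(π)‖_F²), where M(π) = ∫ y xᵀ dπ(x, y) ∈ ℝ^{n×m}. -/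
open MeasureTheory Matrix

noncomputable section

section Helpers

variable {α : Type*} [MeasurableSpace α]

lemma abs_mul_le_of_sq_le {a b c1 c2 : ℝ} (h1 : a ^ 2 ≤ c1) (h2 : b ^ 2 ≤ c2) :
    |a * b| ≤ c1 + c2 := by
  have h3 : |a * b| = |a| * |b| := abs_mul a b
  nlinarith [sq_nonneg (|a| - |b|), sq_abs a, sq_abs b, abs_nonneg a, abs_nonneg b]

lemma sq_le_dot {k : ℕ} (v : Fin k → ℝ) (j : Fin k) : v j ^ 2 ≤ v ⬝ᵥ v := by
  have := Finset.single_le_sum (f := fun i => v i * v i)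
    (fun i _ => mul_self_nonneg _) (Finset.mem_univ j)
  simpa [dotProduct, sq] using this

lemma measurable_dot {k : ℕ} : Measurable (fun v : Fin k → ℝ => v ⬝ᵥ v) := by
  unfold dotProduct
  exact Finset.measurable_sum _ fun i _ => (measurable_pi_apply i).mul (measurable_pi_apply i)

/-- Workhorse: expansion of a squared "signed bilinear" double integral. -/
lemma sq_double_integral {ι : Type*} [Fintype ι]
    (P : Measure α) [IsProbabilityMeasure P] (h : ι → α → ℝ) (s : ι → ℝ)
    (hint : ∀ p q, Integrable (fun a => h p a * h q a) P) :
    ∫ a, ∫ a', (∑ p, s p * (h p a * h p a')) ^ 2 ∂P ∂P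
      = ∑ p, ∑ q, s p * s q * (∫ a, h p a * h q a ∂P) ^ 2 := by
  have inner : ∀ a, ∫ a', (∑ p, s p * (h p a * h p a')) ^ 2 ∂P
      = ∑ p, ∑ q, (s p * s q * (h p a * h q a)) * ∫ a', h p a' * h q a' ∂P := by
    intro a
    have expand : ∀ a' : α, (∑ p, s p * (h p a * h p a')) ^ 2
        = ∑ p, ∑ q, (s p * s q * (h p a * h q a)) * (h p a' * h q a') := by
      intro a'
      rw [sq, Finset.sum_mul_sum]
      refine Finset.sum_congr rfl fun p _ => Finset.sum_congr rfl fun q _ => by ring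
    simp_rw [expand]
    rw [integral_finset_sum _ fun p _ =>
      integrable_finset_sum _ fun q _ => ((hint p q).const_mul _)]
    refine Finset.sum_congr rfl fun p _ => ?_
    rw [integral_finset_sum _ fun q _ => ((hint p q).const_mul _)]
    exact Finset.sum_congr rfl fun q _ => integral_const_mul _ _
  simp_rw [inner]
  rw [integral_finset_sum _ fun p _ => integrable_finset_sum _ fun q _ =>
    (((hint p q).const_mul _).mul_const _)]
  refine Finset.sum_congr rfl fun p _ => ?_
  rw [integral_finset_sum _ fun q _ => (((hint p q).const_mul _).mul_const _)]
  refine Finset.sum_congr rfl fun q _ => ?_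
  have : (fun a => (s p * s q * (h p a * h q a)) * ∫ a', h p a' * h q a' ∂P)
      = fun a => (s p * s q * ∫ a', h p a' * h q a' ∂P) * (h p a * h q a) := by
    funext a; ring
  rw [this, integral_const_mul]; ring

end Helpers

/-- `π` is a coupling of `μ` and `ν`. -/
def IsCoupling {m n : ℕ} (π : Measure ((Fin m → ℝ) × (Fin n → ℝ)))
    (μ : Measure (Fin m → ℝ)) (ν : Measure (Fin n → ℝ)) : Prop :=
  IsProbabilityMeasure π ∧ π.map Prod.fst = μ ∧ π.map Prod.snd = ν

/-- The cross-correlation matrix `M(π) = ∫ y xᵀ dπ(x, y)`, `M(π)_{ij} = ∫ y_i x_j dπ`. -/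
def Mmat {m n : ℕ} (π : Measure ((Fin m → ℝ) × (Fin n → ℝ))) :
    Matrix (Fin n) (Fin m) ℝ :=
  Matrix.of fun i j => ∫ z, z.2 i * z.1 j ∂π

section Main

variable {m n : ℕ} {μ : Measure (Fin m → ℝ)} {ν : Measure (Fin n → ℝ)}

lemma single_double_integral (P : Measure (Fin m → ℝ)) [IsProbabilityMeasure P]
    (h2 : Integrable (fun x => x ⬝ᵥ x) P) :
    ∫ x, ∫ x', (x ⬝ᵥ x') ^ 2 ∂P ∂P = ∑ j, ∑ k, (∫ x, x j * x k ∂P) ^ 2 := by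
  have hint : ∀ j k : Fin m, Integrable (fun x : Fin m → ℝ => x j * x k) P := by
    intro j k
    refine Integrable.mono' (h2.add h2) ?_ (ae_of_all _ fun x => ?_)
    · exact (((measurable_pi_apply j).mul (measurable_pi_apply k))).aestronglyMeasurable
    · exact abs_mul_le_of_sq_le (sq_le_dot x j) (sq_le_dot x k)
  have key := sq_double_integral P (fun j (x : Fin m → ℝ) => x j) (fun _ => (1:ℝ)) hint
  simpa [dotProduct] using key

lemma coupling_marginal_integrable (hμ2 : Integrable (fun x => x ⬝ᵥ x) μ)
    (hν2 : Integrable (fun y => y ⬝ᵥ y) ν)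
    (π : Measure ((Fin m → ℝ) × (Fin n → ℝ))) (hπ : IsCoupling π μ ν) :
    Integrable (fun z : (Fin m → ℝ) × (Fin n → ℝ) => z.1 ⬝ᵥ z.1 + z.2 ⬝ᵥ z.2) π := by
  have h1 : Integrable (fun x => x ⬝ᵥ x) (π.map Prod.fst) := hπ.2.1 ▸ hμ2
  have h2 : Integrable (fun y => y ⬝ᵥ y) (π.map Prod.snd) := hπ.2.2 ▸ hν2
  have h1' := (integrable_map_measure measurable_dot.aestronglyMeasurable
    measurable_fst.aemeasurable).mp h1
  have h2' := (integrable_map_measure measurable_dot.aestronglyMeasurable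
    measurable_snd.aemeasurable).mp h2
  exact h1'.add h2'

lemma coupling_prod_integrable (hμ2 : Integrable (fun x => x ⬝ᵥ x) μ)
    (hν2 : Integrable (fun y => y ⬝ᵥ y) ν)
    (π : Measure ((Fin m → ℝ) × (Fin n → ℝ))) (hπ : IsCoupling π μ ν)
    (f g : ((Fin m → ℝ) × (Fin n → ℝ)) → ℝ) (hf : Measurable f) (hg : Measurable g)
    (hfb : ∀ z, f z ^ 2 ≤ z.1 ⬝ᵥ z.1 + z.2 ⬝ᵥ z.2)
    (hgb : ∀ z, g z ^ 2 ≤ z.1 ⬝ᵥ z.1 + z.2 ⬝ᵥ z.2) :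
    Integrable (fun z => f z * g z) π := by
  have hG := coupling_marginal_integrable hμ2 hν2 π hπ
  refine Integrable.mono' (hG.add hG) ((hf.mul hg).aestronglyMeasurable)
    (ae_of_all _ fun z => abs_mul_le_of_sq_le (hfb z) (hgb z))

lemma sq_le_G1 (z : (Fin m → ℝ) × (Fin n → ℝ)) (j : Fin m) :
    z.1 j ^ 2 ≤ z.1 ⬝ᵥ z.1 + z.2 ⬝ᵥ z.2 := by
  have h := sq_le_dot z.1 j
  have h2 : (0:ℝ) ≤ z.2 ⬝ᵥ z.2 := Finset.sum_nonneg fun i _ => mul_self_nonneg _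
  linarith

lemma sq_le_G2 (z : (Fin m → ℝ) × (Fin n → ℝ)) (i : Fin n) :
    z.2 i ^ 2 ≤ z.1 ⬝ᵥ z.1 + z.2 ⬝ᵥ z.2 := by
  have h := sq_le_dot z.2 i
  have h2 : (0:ℝ) ≤ z.1 ⬝ᵥ z.1 := Finset.sum_nonneg fun i _ => mul_self_nonneg _
  linarith

/-- The key identity for any coupling. -/
lemma coupling_identity (hμ2 : Integrable (fun x => x ⬝ᵥ x) μ)
    (hν2 : Integrable (fun y => y ⬝ᵥ y) ν)
    [IsProbabilityMeasure μ] [IsProbabilityMeasure ν]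
    (π : Measure ((Fin m → ℝ) × (Fin n → ℝ))) (hπ : IsCoupling π μ ν) :
    ∫ z, ∫ z', (z.1 ⬝ᵥ z'.1 - z.2 ⬝ᵥ z'.2) ^ 2 ∂π ∂π
      = (∫ x, ∫ x', (x ⬝ᵥ x') ^ 2 ∂μ ∂μ) + (∫ y, ∫ y', (y ⬝ᵥ y') ^ 2 ∂ν ∂ν)
        - 2 * ∑ i, ∑ j, (Mmat π i j) ^ 2 := by
  haveI : IsProbabilityMeasure π := hπ.1
  set h : (Fin m ⊕ Fin n) → ((Fin m → ℝ) × (Fin n → ℝ)) → ℝ :=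
    fun p z => Sum.elim (fun j => z.1 j) (fun i => z.2 i) p with hh
  set s : (Fin m ⊕ Fin n) → ℝ := Sum.elim (fun _ => (1:ℝ)) (fun _ => (-1:ℝ)) with hs
  have hmeas : ∀ p, Measurable (h p) := by
    rintro (j | i)
    · exact (measurable_pi_apply j).comp measurable_fst
    · exact (measurable_pi_apply i).comp measurable_snd
  have hb : ∀ p z, h p z ^ 2 ≤ z.1 ⬝ᵥ z.1 + z.2 ⬝ᵥ z.2 := by
    rintro (j | i) z
    · exact sq_le_G1 z j
    · exact sq_le_G2 z i
  have hint : ∀ p q, Integrable (fun z => h p z * h q z) π :=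
    fun p q => coupling_prod_integrable hμ2 hν2 π hπ _ _ (hmeas p) (hmeas q) (hb p) (hb q)
  have hpt : ∀ z z' : (Fin m → ℝ) × (Fin n → ℝ),
      z.1 ⬝ᵥ z'.1 - z.2 ⬝ᵥ z'.2 = ∑ p, s p * (h p z * h p z') := by
    intro z z'
    rw [Fintype.sum_sum_type]
    simp [hh, hs, dotProduct]
    ring
  have key := sq_double_integral π h s hint
  simp_rw [← hpt] at key
  rw [key]
  -- marginal translations
  have hmarg1 : ∀ j k : Fin m, (∫ z, z.1 j * z.1 k ∂π) = ∫ x, x j * x k ∂μ := by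
    intro j k
    rw [← hπ.2.1]
    exact (integral_map (f := fun x : Fin m → ℝ => x j * x k) measurable_fst.aemeasurable
      (((measurable_pi_apply j).mul (measurable_pi_apply k) :
        Measurable fun x : Fin m → ℝ => x j * x k)).aestronglyMeasurable).symm
  have hmarg2 : ∀ i i' : Fin n, (∫ z, z.2 i * z.2 i' ∂π) = ∫ y, y i * y i' ∂ν := by
    intro i i'
    rw [← hπ.2.2]
    exact (integral_map (f := fun y : Fin n → ℝ => y i * y i') measurable_snd.aemeasurable
      (((measurable_pi_apply i).mul (measurable_pi_apply i') :
        Measurable fun y : Fin n → ℝ => y i * y i')).aestronglyMeasurable).symm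
  rw [single_double_integral μ hμ2, single_double_integral ν hν2]
  rw [Fintype.sum_sum_type]
  simp only [Fintype.sum_sum_type]
  have hMM : ∀ (i : Fin n) (j : Fin m), (∫ z, z.1 j * z.2 i ∂π) = Mmat π i j := by
    intro i j
    simp only [Mmat, Matrix.of_apply]
    congr 1; funext z; ring
  have e1 : ∀ j k : Fin m, s (Sum.inl j) * s (Sum.inl k)
      * (∫ z, h (Sum.inl j) z * h (Sum.inl k) z ∂π) ^ 2 = (∫ x, x j * x k ∂μ) ^ 2 := by
    intro j k; simp [hs, hh, hmarg1 j k]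
  have e2 : ∀ i i' : Fin n, s (Sum.inr i) * s (Sum.inr i')
      * (∫ z, h (Sum.inr i) z * h (Sum.inr i') z ∂π) ^ 2 = (∫ y, y i * y i' ∂ν) ^ 2 := by
    intro i i'; simp [hs, hh, hmarg2 i i']
  have e3 : ∀ (j : Fin m) (i : Fin n), s (Sum.inl j) * s (Sum.inr i)
      * (∫ z, h (Sum.inl j) z * h (Sum.inr i) z ∂π) ^ 2 = -(Mmat π i j) ^ 2 := by
    intro j i; simp [hs, hh, hMM i j]
  have e4 : ∀ (i : Fin n) (j : Fin m), s (Sum.inr i) * s (Sum.inl j)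
      * (∫ z, h (Sum.inr i) z * h (Sum.inl j) z ∂π) ^ 2 = -(Mmat π i j) ^ 2 := by
    intro i j
    have : (∫ z, h (Sum.inr i) z * h (Sum.inl j) z ∂π) = Mmat π i j := by
      simp only [Mmat, Matrix.of_apply, hh]; simp
    simp [hs, this]
  simp_rw [e1, e2, e3, e4]
  rw [Finset.sum_add_distrib, Finset.sum_add_distrib]
  have hc : (∑ x : Fin m, ∑ i : Fin n, -Mmat π i x ^ 2)
      = ∑ i : Fin n, ∑ x : Fin m, -Mmat π i x ^ 2 := Finset.sum_comm
  rw [hc]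
  simp only [Finset.sum_neg_distrib]
  ring

end Main

/-- `inf_{π ∈ Π(μ,ν)} ∫∫ (⟨x,x'⟩ − ⟨y,y'⟩)² dπ dπ
= ∫∫ ⟨x,x'⟩² dμ dμ + ∫∫ ⟨y,y'⟩² dν dν − 2 sup_{π ∈ Π(μ,ν)} ‖M(π)‖_F²`. -/
theorem inf_GW_eq_const_sub_sup {m n : ℕ}
    (μ : Measure (Fin m → ℝ)) (ν : Measure (Fin n → ℝ))
    [IsProbabilityMeasure μ] [IsProbabilityMeasure ν]
    (hμ4 : Integrable (fun x => (x ⬝ᵥ x) ^ 2) μ)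
    (hν4 : Integrable (fun y => (y ⬝ᵥ y) ^ 2) ν) :
    sInf {r : ℝ | ∃ π : Measure ((Fin m → ℝ) × (Fin n → ℝ)), IsCoupling π μ ν ∧
          r = ∫ z, ∫ z', (z.1 ⬝ᵥ z'.1 - z.2 ⬝ᵥ z'.2) ^ 2 ∂π ∂π}
      = (∫ x, ∫ x', (x ⬝ᵥ x') ^ 2 ∂μ ∂μ) + (∫ y, ∫ y', (y ⬝ᵥ y') ^ 2 ∂ν ∂ν)
        - 2 * sSup {r : ℝ | ∃ π : Measure ((Fin m → ℝ) × (Fin n → ℝ)), IsCoupling π μ ν ∧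
            r = ∑ i, ∑ j, (Mmat π i j) ^ 2} := by
  have hμ2 : Integrable (fun x => x ⬝ᵥ x) μ := by
    refine Integrable.mono' (hμ4.add (integrable_const 1))
      measurable_dot.aestronglyMeasurable (ae_of_all _ fun x => ?_)
    have h0 : (0:ℝ) ≤ x ⬝ᵥ x := Finset.sum_nonneg fun i _ => mul_self_nonneg _
    simp only [Real.norm_eq_abs, abs_of_nonneg h0, Pi.add_apply]
    nlinarith
  have hν2 : Integrable (fun y => y ⬝ᵥ y) ν := by
    refine Integrable.mono' (hν4.add (integrable_const 1))
      measurable_dot.aestronglyMeasurable (ae_of_all _ fun y => ?_)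
    have h0 : (0:ℝ) ≤ y ⬝ᵥ y := Finset.sum_nonneg fun i _ => mul_self_nonneg _
    simp only [Real.norm_eq_abs, abs_of_nonneg h0, Pi.add_apply]
    nlinarith
  set S : Set ℝ := {r : ℝ | ∃ π : Measure ((Fin m → ℝ) × (Fin n → ℝ)), IsCoupling π μ ν ∧
      r = ∑ i, ∑ j, (Mmat π i j) ^ 2} with hSdef
  set T : Set ℝ := {r : ℝ | ∃ π : Measure ((Fin m → ℝ) × (Fin n → ℝ)), IsCoupling π μ ν ∧
      r = ∫ z, ∫ z', (z.1 ⬝ᵥ z'.1 - z.2 ⬝ᵥ z'.2) ^ 2 ∂π ∂π} with hTdef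
  set C : ℝ := (∫ x, ∫ x', (x ⬝ᵥ x') ^ 2 ∂μ ∂μ) + (∫ y, ∫ y', (y ⬝ᵥ y') ^ 2 ∂ν ∂ν) with hCdef
  have hid : ∀ π : Measure ((Fin m → ℝ) × (Fin n → ℝ)), IsCoupling π μ ν →
      (∫ z, ∫ z', (z.1 ⬝ᵥ z'.1 - z.2 ⬝ᵥ z'.2) ^ 2 ∂π ∂π)
        = C - 2 * ∑ i, ∑ j, (Mmat π i j) ^ 2 := by
    intro π hπ
    rw [coupling_identity hμ2 hν2 π hπ, hCdef]
  have himg : T = (fun r => C - 2 * r) '' S := by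
    ext r; constructor
    · rintro ⟨π, hπ, rfl⟩
      exact ⟨∑ i, ∑ j, (Mmat π i j) ^ 2, ⟨π, hπ, rfl⟩, (hid π hπ).symm⟩
    · rintro ⟨r', ⟨π, hπ, rfl⟩, rfl⟩
      exact ⟨π, hπ, (hid π hπ).symm⟩
  have hcoup0 : IsCoupling (μ.prod ν) μ ν := by
    refine ⟨inferInstance, ?_, ?_⟩
    · simp [Measure.map_fst_prod]
    · simp [Measure.map_snd_prod]
  have hSne : S.Nonempty := ⟨_, ⟨μ.prod ν, hcoup0, rfl⟩⟩
  set K : ℝ := (∫ x, x ⬝ᵥ x ∂μ) + (∫ y, y ⬝ᵥ y ∂ν) with hKdef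
  have hSub : ∀ r ∈ S, r ≤ (n : ℝ) * m * K ^ 2 := by
    rintro r ⟨π, hπ, rfl⟩
    haveI := hπ.1
    have i1 : Integrable (fun z : (Fin m → ℝ) × (Fin n → ℝ) => z.1 ⬝ᵥ z.1) π := by
      have h1 : Integrable (fun x => x ⬝ᵥ x) (π.map Prod.fst) := hπ.2.1 ▸ hμ2
      exact (integrable_map_measure measurable_dot.aestronglyMeasurable
        measurable_fst.aemeasurable).mp h1
    have i2 : Integrable (fun z : (Fin m → ℝ) × (Fin n → ℝ) => z.2 ⬝ᵥ z.2) π := by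
      have h2 : Integrable (fun y => y ⬝ᵥ y) (π.map Prod.snd) := hπ.2.2 ▸ hν2
      exact (integrable_map_measure measurable_dot.aestronglyMeasurable
        measurable_snd.aemeasurable).mp h2
    have hG : Integrable (fun z : (Fin m → ℝ) × (Fin n → ℝ) => z.1 ⬝ᵥ z.1 + z.2 ⬝ᵥ z.2) π :=
      i1.add i2
    have hGK : ∫ z, (z.1 ⬝ᵥ z.1 + z.2 ⬝ᵥ z.2) ∂π = K := by
      rw [integral_add i1 i2, hKdef]
      congr 1
      · rw [← hπ.2.1]
        exact (integral_map (f := fun x : Fin m → ℝ => x ⬝ᵥ x) measurable_fst.aemeasurable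
          measurable_dot.aestronglyMeasurable).symm
      · rw [← hπ.2.2]
        exact (integral_map (f := fun y : Fin n → ℝ => y ⬝ᵥ y) measurable_snd.aemeasurable
          measurable_dot.aestronglyMeasurable).symm
    have hMb : ∀ (i : Fin n) (j : Fin m), |Mmat π i j| ≤ K := by
      intro i j
      have hint : Integrable (fun z : (Fin m → ℝ) × (Fin n → ℝ) => z.2 i * z.1 j) π :=
        coupling_prod_integrable hμ2 hν2 π hπ _ _
          ((measurable_pi_apply i).comp measurable_snd)
          ((measurable_pi_apply j).comp measurable_fst)
          (fun z => sq_le_G2 z i) (fun z => sq_le_G1 z j)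
      calc |Mmat π i j| = |∫ z, z.2 i * z.1 j ∂π| := rfl
        _ ≤ ∫ z, |z.2 i * z.1 j| ∂π := by
            simpa [Real.norm_eq_abs, abs_mul] using
              norm_integral_le_integral_norm (μ := π) (fun z => z.2 i * z.1 j)
        _ ≤ ∫ z, (z.1 ⬝ᵥ z.1 + z.2 ⬝ᵥ z.2) ∂π := by
            refine integral_mono hint.abs hG fun z => ?_
            have h := abs_mul_le_of_sq_le (sq_le_dot z.2 i) (sq_le_dot z.1 j)
            linarith
        _ = K := hGK
    have hM2 : ∀ (i : Fin n) (j : Fin m), (Mmat π i j) ^ 2 ≤ K ^ 2 := by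
      intro i j
      have h := hMb i j
      nlinarith [abs_nonneg (Mmat π i j), sq_abs (Mmat π i j)]
    calc ∑ i, ∑ j, (Mmat π i j) ^ 2 ≤ ∑ _i : Fin n, ∑ _j : Fin m, K ^ 2 :=
          Finset.sum_le_sum fun i _ => Finset.sum_le_sum fun j _ => hM2 i j
      _ = (n : ℝ) * m * K ^ 2 := by
          simp [Finset.sum_const, Finset.card_univ, nsmul_eq_mul]; ring
  have hSbdd : BddAbove S := ⟨_, fun r hr => hSub r hr⟩
  have hIbdd : BddBelow ((fun r => C - 2 * r) '' S) := by
    refine ⟨C - 2 * ((n : ℝ) * m * K ^ 2), ?_⟩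
    rintro t ⟨r, hr, rfl⟩
    have := hSub r hr
    simp only
    linarith
  rw [himg]
  apply le_antisymm
  · have h1 : sSup S ≤ (C - sInf ((fun r => C - 2 * r) '' S)) / 2 := by
      apply csSup_le hSne
      intro r hr
      have h2 : sInf ((fun r => C - 2 * r) '' S) ≤ C - 2 * r := csInf_le hIbdd ⟨r, hr, rfl⟩
      linarith
    linarith
  · apply le_csInf (hSne.image _)
    rintro t ⟨r, hr, rfl⟩
    have := le_csSup hSbdd hr
    simp only
    linarith

end
end

section
/- Let μ and ν be Borel probability measures on ℝ^m and ℝ^n respectively, with finite fourth moments. Then a coupling π* ∈ Π(μ, ν) minimizes the Kantorovich inner-product Gromov–Wasserstein functional π ↦ ∫∫ (⟨x, x'⟩ − ⟨y, y'⟩)² dπ(x, y) dπ(x', y') over Π(μ, ν) if and only if π* maximizes the functional π ↦ ‖M(π)‖_F over Π(μ, ν), where M(π) = ∫ y xᵀ dπ(x, y) ∈ ℝ^{n×m}. -/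
open MeasureTheory Matrix

noncomputable section

/-- The Frobenius norm of a matrix. -/
def frobNorm {m n : ℕ} (A : Matrix (Fin n) (Fin m) ℝ) : ℝ :=
  Real.sqrt (∑ i, ∑ j, (A i j) ^ 2)

/-- The Kantorovich inner-product GW functional
`π ↦ ∫∫ (⟨x, x'⟩ − ⟨y, y'⟩)² dπ dπ`. -/
def GWfun {m n : ℕ} (π : Measure ((Fin m → ℝ) × (Fin n → ℝ))) : ℝ :=
  ∫ z, ∫ z', (z.1 ⬝ᵥ z'.1 - z.2 ⬝ᵥ z'.2) ^ 2 ∂π ∂π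

namespace GWaux

variable {m n : ℕ}

lemma dot_nonneg' {m : ℕ} (x : Fin m → ℝ) : 0 ≤ x ⬝ᵥ x :=
  Finset.sum_nonneg fun _ _ => mul_self_nonneg _

lemma cont_dot {m : ℕ} : Continuous (fun x : Fin m → ℝ => x ⬝ᵥ x) := by
  unfold dotProduct; fun_prop

lemma integrable_dot {m : ℕ} (μ : Measure (Fin m → ℝ)) [IsProbabilityMeasure μ]
    (hμ4 : Integrable (fun x => (x ⬝ᵥ x) ^ 2) μ) :
    Integrable (fun x => x ⬝ᵥ x) μ := by
  refine (hμ4.add (integrable_const 1)).mono' cont_dot.aestronglyMeasurable ?_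
  filter_upwards with x
  simp only [Pi.add_apply]
  rw [Real.norm_eq_abs, abs_of_nonneg (dot_nonneg' x)]
  nlinarith [sq_nonneg (x ⬝ᵥ x - 1)]

lemma integrable_g (μ : Measure (Fin m → ℝ)) (ν : Measure (Fin n → ℝ))
    [IsProbabilityMeasure μ] [IsProbabilityMeasure ν]
    (hμ4 : Integrable (fun x => (x ⬝ᵥ x) ^ 2) μ)
    (hν4 : Integrable (fun y => (y ⬝ᵥ y) ^ 2) ν)
    (π : Measure ((Fin m → ℝ) × (Fin n → ℝ)))
    (hπ1 : π.map Prod.fst = μ) (hπ2 : π.map Prod.snd = ν) :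
    Integrable (fun z : (Fin m → ℝ) × (Fin n → ℝ) => z.1 ⬝ᵥ z.1 + z.2 ⬝ᵥ z.2) π := by
  have h1 : Integrable (fun x => x ⬝ᵥ x) (π.map Prod.fst) := hπ1 ▸ integrable_dot μ hμ4
  have h2 : Integrable (fun y => y ⬝ᵥ y) (π.map Prod.snd) := hπ2 ▸ integrable_dot ν hν4
  have h1' := (integrable_map_measure h1.aestronglyMeasurable measurable_fst.aemeasurable).mp h1
  have h2' := (integrable_map_measure h2.aestronglyMeasurable measurable_snd.aemeasurable).mp h2
  exact h1'.add h2'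

lemma coord_sq_le_fst (z : (Fin m → ℝ) × (Fin n → ℝ)) (j : Fin m) :
    (z.1 j) ^ 2 ≤ z.1 ⬝ᵥ z.1 + z.2 ⬝ᵥ z.2 := by
  have h : z.1 j * z.1 j ≤ z.1 ⬝ᵥ z.1 :=
    Finset.single_le_sum (f := fun i => z.1 i * z.1 i)
      (fun i _ => mul_self_nonneg _) (Finset.mem_univ j)
  have := dot_nonneg' z.2
  nlinarith

lemma coord_sq_le_snd (z : (Fin m → ℝ) × (Fin n → ℝ)) (i : Fin n) :
    (z.2 i) ^ 2 ≤ z.1 ⬝ᵥ z.1 + z.2 ⬝ᵥ z.2 := by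
  have h : z.2 i * z.2 i ≤ z.2 ⬝ᵥ z.2 :=
    Finset.single_le_sum (f := fun k => z.2 k * z.2 k)
      (fun k _ => mul_self_nonneg _) (Finset.mem_univ i)
  have := dot_nonneg' z.1
  nlinarith

lemma integrable_mul_coord (π : Measure ((Fin m → ℝ) × (Fin n → ℝ)))
    (hg : Integrable (fun z : (Fin m → ℝ) × (Fin n → ℝ) => z.1 ⬝ᵥ z.1 + z.2 ⬝ᵥ z.2) π)
    (u v : ((Fin m → ℝ) × (Fin n → ℝ)) → ℝ) (hu : Continuous u) (hv : Continuous v)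
    (hub : ∀ z, u z ^ 2 ≤ z.1 ⬝ᵥ z.1 + z.2 ⬝ᵥ z.2)
    (hvb : ∀ z, v z ^ 2 ≤ z.1 ⬝ᵥ z.1 + z.2 ⬝ᵥ z.2) :
    Integrable (fun z => u z * v z) π := by
  refine hg.mono' (hu.mul hv).aestronglyMeasurable ?_
  filter_upwards with z
  rw [Real.norm_eq_abs, abs_mul]
  nlinarith [hub z, hvb z, sq_nonneg (|u z| - |v z|), sq_abs (u z), sq_abs (v z),
    abs_nonneg (u z), abs_nonneg (v z)]

lemma integral_double_sum {α ι κ : Type*} [Fintype ι] [Fintype κ]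
    [MeasurableSpace α] (π : Measure α) (c : ι → κ → ℝ) (f : ι → κ → α → ℝ)
    (hf : ∀ j k, Integrable (f j k) π) :
    ∫ a, ∑ j, ∑ k, c j k * f j k a ∂π = ∑ j, ∑ k, c j k * ∫ a, f j k a ∂π := by
  rw [integral_finset_sum _ (fun j _ => integrable_finset_sum _ fun k _ => (hf j k).const_mul _)]
  refine Finset.sum_congr rfl fun j _ => ?_
  rw [integral_finset_sum _ (fun k _ => (hf j k).const_mul _)]
  exact Finset.sum_congr rfl fun k _ => integral_const_mul _ _

lemma integral_double_sum' {α ι κ : Type*} [Fintype ι] [Fintype κ]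
    [MeasurableSpace α] (π : Measure α) (c : ι → κ → ℝ) (f : ι → κ → α → ℝ)
    (hf : ∀ j k, Integrable (f j k) π) :
    ∫ a, ∑ j, ∑ k, f j k a * c j k ∂π = ∑ j, ∑ k, (∫ a, f j k a ∂π) * c j k := by
  rw [integral_finset_sum _ (fun j _ => integrable_finset_sum _ fun k _ => (hf j k).mul_const _)]
  refine Finset.sum_congr rfl fun j _ => ?_
  rw [integral_finset_sum _ (fun k _ => (hf j k).mul_const _)]
  exact Finset.sum_congr rfl fun k _ => integral_mul_const _ _

lemma GW_eq (μ : Measure (Fin m → ℝ)) (ν : Measure (Fin n → ℝ))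
    [IsProbabilityMeasure μ] [IsProbabilityMeasure ν]
    (hμ4 : Integrable (fun x => (x ⬝ᵥ x) ^ 2) μ)
    (hν4 : Integrable (fun y => (y ⬝ᵥ y) ^ 2) ν)
    (π : Measure ((Fin m → ℝ) × (Fin n → ℝ))) (hπ : IsCoupling π μ ν) :
    GWfun π = (∑ j, ∑ k, (∫ x, x j * x k ∂μ) ^ 2)
      + (∑ i, ∑ k, (∫ y, y i * y k ∂ν) ^ 2)
      - 2 * ∑ i, ∑ j, (Mmat π i j) ^ 2 := by
  obtain ⟨hprob, hπ1, hπ2⟩ := hπ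
  have hg := integrable_g μ ν hμ4 hν4 π hπ1 hπ2
  have hc1 : ∀ j : Fin m, Continuous (fun z : (Fin m → ℝ) × (Fin n → ℝ) => z.1 j) :=
    fun j => (continuous_apply j).comp continuous_fst
  have hc2 : ∀ i : Fin n, Continuous (fun z : (Fin m → ℝ) × (Fin n → ℝ) => z.2 i) :=
    fun i => (continuous_apply i).comp continuous_snd
  have hxx : ∀ j k : Fin m, Integrable (fun z : (Fin m → ℝ) × (Fin n → ℝ) => z.1 j * z.1 k) π :=
    fun j k => integrable_mul_coord π hg _ _ (hc1 j) (hc1 k)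
      (fun z => coord_sq_le_fst z j) (fun z => coord_sq_le_fst z k)
  have hyx : ∀ (i : Fin n) (j : Fin m),
      Integrable (fun z : (Fin m → ℝ) × (Fin n → ℝ) => z.2 i * z.1 j) π :=
    fun i j => integrable_mul_coord π hg _ _ (hc2 i) (hc1 j)
      (fun z => coord_sq_le_snd z i) (fun z => coord_sq_le_fst z j)
  have hyy : ∀ i k : Fin n, Integrable (fun z : (Fin m → ℝ) × (Fin n → ℝ) => z.2 i * z.2 k) π :=
    fun i k => integrable_mul_coord π hg _ _ (hc2 i) (hc2 k)
      (fun z => coord_sq_le_snd z i) (fun z => coord_sq_le_snd z k)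
  set A : Fin m → Fin m → ℝ := fun j k => ∫ z, z.1 j * z.1 k ∂π with hA
  set B : Fin n → Fin n → ℝ := fun i k => ∫ z, z.2 i * z.2 k ∂π with hB
  set M : Fin n → Fin m → ℝ := fun i j => ∫ z, z.2 i * z.1 j ∂π with hM
  have inner_eq : ∀ z : (Fin m → ℝ) × (Fin n → ℝ),
      (∫ z', (z.1 ⬝ᵥ z'.1 - z.2 ⬝ᵥ z'.2) ^ 2 ∂π)
      = (∑ j, ∑ k, (z.1 j * z.1 k) * A j k)
        - 2 * (∑ i, ∑ j, (z.2 i * z.1 j) * M i j)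
        + (∑ i, ∑ k, (z.2 i * z.2 k) * B i k) := by
    intro z
    have expand : ∀ z' : (Fin m → ℝ) × (Fin n → ℝ),
        (z.1 ⬝ᵥ z'.1 - z.2 ⬝ᵥ z'.2) ^ 2
        = (∑ j, ∑ k, (z.1 j * z.1 k) * (z'.1 j * z'.1 k))
          - 2 * (∑ i, ∑ j, (z.2 i * z.1 j) * (z'.2 i * z'.1 j))
          + (∑ i, ∑ k, (z.2 i * z.2 k) * (z'.2 i * z'.2 k)) := by
      intro z'
      simp only [dotProduct]
      have h1 : (∑ j, z.1 j * z'.1 j) * (∑ k, z.1 k * z'.1 k)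
          = ∑ j, ∑ k, (z.1 j * z.1 k) * (z'.1 j * z'.1 k) := by
        rw [Finset.sum_mul_sum]
        exact Finset.sum_congr rfl fun j _ => Finset.sum_congr rfl fun k _ => by ring
      have h2 : (∑ i, z.2 i * z'.2 i) * (∑ j, z.1 j * z'.1 j)
          = ∑ i, ∑ j, (z.2 i * z.1 j) * (z'.2 i * z'.1 j) := by
        rw [Finset.sum_mul_sum]
        exact Finset.sum_congr rfl fun i _ => Finset.sum_congr rfl fun j _ => by ring
      have h3 : (∑ i, z.2 i * z'.2 i) * (∑ k, z.2 k * z'.2 k)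
          = ∑ i, ∑ k, (z.2 i * z.2 k) * (z'.2 i * z'.2 k) := by
        rw [Finset.sum_mul_sum]
        exact Finset.sum_congr rfl fun i _ => Finset.sum_congr rfl fun k _ => by ring
      calc ((∑ j, z.1 j * z'.1 j) - ∑ i, z.2 i * z'.2 i) ^ 2
          = (∑ j, z.1 j * z'.1 j) * (∑ k, z.1 k * z'.1 k)
            - 2 * ((∑ i, z.2 i * z'.2 i) * (∑ j, z.1 j * z'.1 j))
            + (∑ i, z.2 i * z'.2 i) * (∑ k, z.2 k * z'.2 k) := by ring
        _ = _ := by rw [h1, h2, h3]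
    have I1 : Integrable (fun z' : (Fin m → ℝ) × (Fin n → ℝ) =>
        ∑ j, ∑ k, (z.1 j * z.1 k) * (z'.1 j * z'.1 k)) π :=
      integrable_finset_sum _ fun j _ => integrable_finset_sum _ fun k _ => (hxx j k).const_mul _
    have I2 : Integrable (fun z' : (Fin m → ℝ) × (Fin n → ℝ) =>
        ∑ i, ∑ j, (z.2 i * z.1 j) * (z'.2 i * z'.1 j)) π :=
      integrable_finset_sum _ fun i _ => integrable_finset_sum _ fun j _ => (hyx i j).const_mul _
    have I3 : Integrable (fun z' : (Fin m → ℝ) × (Fin n → ℝ) =>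
        ∑ i, ∑ k, (z.2 i * z.2 k) * (z'.2 i * z'.2 k)) π :=
      integrable_finset_sum _ fun i _ => integrable_finset_sum _ fun k _ => (hyy i k).const_mul _
    have I2' : Integrable (fun z' : (Fin m → ℝ) × (Fin n → ℝ) =>
        2 * ∑ i, ∑ j, (z.2 i * z.1 j) * (z'.2 i * z'.1 j)) π := I2.const_mul 2
    have I12 : Integrable (fun z' : (Fin m → ℝ) × (Fin n → ℝ) =>
        (∑ j, ∑ k, (z.1 j * z.1 k) * (z'.1 j * z'.1 k))
        - 2 * ∑ i, ∑ j, (z.2 i * z.1 j) * (z'.2 i * z'.1 j)) π := I1.sub I2'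
    simp only [expand]
    rw [integral_add I12 I3, integral_sub I1 I2', integral_const_mul]
    rw [integral_double_sum π _ _ hxx, integral_double_sum π _ _ hyx,
      integral_double_sum π _ _ hyy]
  have Ia : Integrable (fun z : (Fin m → ℝ) × (Fin n → ℝ) =>
      ∑ j, ∑ k, (z.1 j * z.1 k) * A j k) π :=
    integrable_finset_sum _ fun j _ => integrable_finset_sum _ fun k _ => (hxx j k).mul_const _
  have Ib : Integrable (fun z : (Fin m → ℝ) × (Fin n → ℝ) =>
      ∑ i, ∑ j, (z.2 i * z.1 j) * M i j) π :=
    integrable_finset_sum _ fun i _ => integrable_finset_sum _ fun j _ => (hyx i j).mul_const _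
  have Ic : Integrable (fun z : (Fin m → ℝ) × (Fin n → ℝ) =>
      ∑ i, ∑ k, (z.2 i * z.2 k) * B i k) π :=
    integrable_finset_sum _ fun i _ => integrable_finset_sum _ fun k _ => (hyy i k).mul_const _
  have houter : GWfun π
      = (∑ j, ∑ k, A j k * A j k) - 2 * (∑ i, ∑ j, M i j * M i j)
        + (∑ i, ∑ k, B i k * B i k) := by
    unfold GWfun
    have Ib' : Integrable (fun z : (Fin m → ℝ) × (Fin n → ℝ) =>
        2 * ∑ i, ∑ j, (z.2 i * z.1 j) * M i j) π := Ib.const_mul 2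
    have Iab : Integrable (fun z : (Fin m → ℝ) × (Fin n → ℝ) =>
        (∑ j, ∑ k, (z.1 j * z.1 k) * A j k)
        - 2 * ∑ i, ∑ j, (z.2 i * z.1 j) * M i j) π := Ia.sub Ib'
    simp only [inner_eq]
    rw [integral_add Iab Ic, integral_sub Ia Ib', integral_const_mul]
    rw [integral_double_sum' π _ _ hxx, integral_double_sum' π _ _ hyx,
      integral_double_sum' π _ _ hyy]
  have hAeq : ∀ j k, A j k = ∫ x, x j * x k ∂μ := by
    intro j k
    have hsm : AEStronglyMeasurable (fun x : Fin m → ℝ => x j * x k) (π.map Prod.fst) :=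
      ((continuous_apply j).mul (continuous_apply k)).aestronglyMeasurable
    rw [hA, ← hπ1, integral_map measurable_fst.aemeasurable hsm]
  have hBeq : ∀ i k, B i k = ∫ y, y i * y k ∂ν := by
    intro i k
    have hsm : AEStronglyMeasurable (fun y : Fin n → ℝ => y i * y k) (π.map Prod.snd) :=
      ((continuous_apply i).mul (continuous_apply k)).aestronglyMeasurable
    rw [hB, ← hπ2, integral_map measurable_snd.aemeasurable hsm]
  have hMeq : ∀ i j, M i j = Mmat π i j := fun i j => rfl
  rw [houter]
  simp only [hAeq, hBeq, hMeq, ← pow_two]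
  ring

end GWaux

/-- a coupling `π*` minimizes the Kantorovich inner-product GW functional over
`Π(μ, ν)` iff it maximizes `π ↦ ‖M(π)‖_F` over `Π(μ, ν)`. -/
theorem minimizes_GW_iff_maximizes_frobenius {m n : ℕ}
    (μ : Measure (Fin m → ℝ)) (ν : Measure (Fin n → ℝ))
    [IsProbabilityMeasure μ] [IsProbabilityMeasure ν]
    (hμ4 : Integrable (fun x => (x ⬝ᵥ x) ^ 2) μ)
    (hν4 : Integrable (fun y => (y ⬝ᵥ y) ^ 2) ν)
    (πstar : Measure ((Fin m → ℝ) × (Fin n → ℝ))) (hπstar : IsCoupling πstar μ ν) :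
    (∀ π : Measure ((Fin m → ℝ) × (Fin n → ℝ)), IsCoupling π μ ν →
        GWfun πstar ≤ GWfun π)
    ↔ (∀ π : Measure ((Fin m → ℝ) × (Fin n → ℝ)), IsCoupling π μ ν →
        frobNorm (Mmat π) ≤ frobNorm (Mmat πstar)) := by
  have key := GWaux.GW_eq μ ν hμ4 hν4
  have hnn : ∀ π : Measure ((Fin m → ℝ) × (Fin n → ℝ)),
      (0:ℝ) ≤ ∑ i, ∑ j, (Mmat π i j) ^ 2 :=
    fun π => Finset.sum_nonneg fun i _ => Finset.sum_nonneg fun j _ => sq_nonneg _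
  constructor
  · intro h π hπ
    have h1 := h π hπ
    rw [key πstar hπstar, key π hπ] at h1
    exact Real.sqrt_le_sqrt (by linarith)
  · intro h π hπ
    have h1 := h π hπ
    have hS : ∑ i, ∑ j, (Mmat π i j) ^ 2 ≤ ∑ i, ∑ j, (Mmat πstar i j) ^ 2 := by
      have := pow_le_pow_left₀ (Real.sqrt_nonneg _) h1 2
      unfold frobNorm at this
      rwa [Real.sq_sqrt (hnn π), Real.sq_sqrt (hnn πstar)] at this
    rw [key πstar hπstar, key π hπ]
    linarith


end
end
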